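/- Let σ₊, σ₋ > 0 and define Φ : ℝ → ℝ by Φ(η) = (2√σ₋/(√σ₊+√σ₋))·(F(η/√σ₊) + (√σ₊−√σ₋)/(2√σ₋)) for η > 0 and Φ(η) = (2√σ₊/(√σ₊+√σ₋))·F(η/√σ₋) for η ≤ 0, where F(η) = 1 − (1/2)e^{−η} for η > 0 and F(η) = (1/2)e^{η} for η ≤ 0. Then Φ is continuous at 0 with Φ(0) = √σ₊/(√σ₊+√σ₋), and the one-sided derivatives satisfy the transmission condition σ₊·Φ'(0⁺) = σ₋·Φ'(0⁻). -/

import Mathlib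

open Real Set

noncomputable def Fpw (η : ℝ) : ℝ :=
  if 0 < η then 1 - (1 / 2) * Real.exp (-η) else (1 / 2) * Real.exp η

noncomputable def PhiTP (sp sm : ℝ) (η : ℝ) : ℝ :=
  if 0 < η then
    (2 * Real.sqrt sm / (Real.sqrt sp + Real.sqrt sm)) *
      (Fpw (η / Real.sqrt sp) + (Real.sqrt sp - Real.sqrt sm) / (2 * Real.sqrt sm))
  else
    (2 * Real.sqrt sp / (Real.sqrt sp + Real.sqrt sm)) * Fpw (η / Real.sqrt sm)

/-! Both branches of `F` take the value `1/2` with slope `1/2` at `0`, so `F` is differentiable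
there; each branch of `Φ` is then a rescaled, shifted copy of `F`, and the constants are chosen
so that the two copies meet at `0`. The one-sided slopes are `√σ₋ / (√σ₊ (√σ₊ + √σ₋))` and
`√σ₊ / (√σ₋ (√σ₊ + √σ₋))`, and multiplying by `σ₊` resp. `σ₋` gives `√σ₊ √σ₋ / (√σ₊ + √σ₋)`
on both sides. -/

lemma Fpw_zero : Fpw 0 = 1 / 2 := by
  simp [Fpw]

lemma Fpw_eqOn_Ici : EqOn Fpw (fun η => 1 - 1 / 2 * exp (-η)) (Ici 0) := by
  intro η hη
  rcases (mem_Ici.mp hη).eq_or_lt with rfl | hpos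
  · rw [Fpw_zero]
    norm_num
  · simp only [Fpw, if_pos hpos]

lemma Fpw_eqOn_Iic : EqOn Fpw (fun η => 1 / 2 * exp η) (Iic 0) := by
  intro η hη
  simp only [Fpw, if_neg (not_lt.mpr (mem_Iic.mp hη))]

lemma hasDerivAt_Fpw_zero : HasDerivAt Fpw (1 / 2) 0 := by
  have hright : HasDerivWithinAt Fpw (1 / 2) (Ici 0) 0 := by
    have h := ((hasDerivAt_neg (0 : ℝ)).exp.const_mul (1 / 2)).const_sub 1
    refine (HasDerivAt.hasDerivWithinAt ?_).congr_of_mem Fpw_eqOn_Ici self_mem_Ici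
    convert h using 1
    simp
  have hleft : HasDerivWithinAt Fpw (1 / 2) (Iic 0) 0 := by
    have h := (hasDerivAt_exp (0 : ℝ)).const_mul (1 / 2)
    refine (HasDerivAt.hasDerivWithinAt ?_).congr_of_mem Fpw_eqOn_Iic self_mem_Iic
    simpa using h
  simpa [Iic_union_Ici] using hleft.union hright

lemma hasDerivAt_mul_Fpw_div_add (a b c : ℝ) :
    HasDerivAt (fun η => a * (Fpw (η / b) + c)) (a * (1 / 2 / b)) 0 := by
  have hF : HasDerivAt Fpw (1 / 2) (0 / b) := by
    rw [zero_div]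
    exact hasDerivAt_Fpw_zero
  have h := ((hF.comp 0 ((hasDerivAt_id 0).div_const b)).add_const c).const_mul a
  exact h.congr_deriv (by ring)

lemma PhiTP_zero (sp sm : ℝ) : PhiTP sp sm 0 = √sp / (√sp + √sm) := by
  simp only [PhiTP, lt_irrefl, if_false, zero_div, Fpw_zero]
  ring

lemma PhiTP_eqOn_Ici (sp : ℝ) {sm : ℝ} (hsm : 0 < sm) :
    EqOn (PhiTP sp sm)
      (fun η => 2 * √sm / (√sp + √sm) * (Fpw (η / √sp) + (√sp - √sm) / (2 * √sm))) (Ici 0) := by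
  intro η hη
  rcases (mem_Ici.mp hη).eq_or_lt with rfl | hpos
  · have ht : √sm ≠ 0 := (sqrt_pos.mpr hsm).ne'
    simp only [PhiTP_zero, zero_div, Fpw_zero]
    field_simp
    ring
  · simp only [PhiTP, if_pos hpos]

lemma PhiTP_eqOn_Iic (sp sm : ℝ) :
    EqOn (PhiTP sp sm) (fun η => 2 * √sp / (√sp + √sm) * (Fpw (η / √sm) + 0)) (Iic 0) := by
  intro η hη
  simp only [PhiTP, if_neg (not_lt.mpr (mem_Iic.mp hη)), add_zero]

theorem stmt_5 (sp sm : ℝ) (hsp : 0 < sp) (hsm : 0 < sm) :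
    ContinuousAt (PhiTP sp sm) 0 ∧
    PhiTP sp sm 0 = Real.sqrt sp / (Real.sqrt sp + Real.sqrt sm) ∧
    ∃ dp dm : ℝ,
      HasDerivWithinAt (PhiTP sp sm) dp (Set.Ici 0) 0 ∧
      HasDerivWithinAt (PhiTP sp sm) dm (Set.Iic 0) 0 ∧
      sp * dp = sm * dm := by
  have hright := (hasDerivAt_mul_Fpw_div_add _ _ _).hasDerivWithinAt.congr_of_mem
    (PhiTP_eqOn_Ici sp hsm) self_mem_Ici
  have hleft := (hasDerivAt_mul_Fpw_div_add _ _ _).hasDerivWithinAt.congr_of_mem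
    (PhiTP_eqOn_Iic sp sm) self_mem_Iic
  refine ⟨continuousAt_iff_continuous_left_right.mpr
      ⟨hleft.continuousWithinAt, hright.continuousWithinAt⟩,
    PhiTP_zero sp sm, _, _, hright, hleft, ?_⟩
  have hs : 0 < √sp := sqrt_pos.mpr hsp
  have ht : 0 < √sm := sqrt_pos.mpr hsm
  field_simp
  rw [sq_sqrt hsp.le, sq_sqrt hsm.le]
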